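/- For any nonzero real p×p matrix M: inc(M) ≤ ξ(T(M)) ≤ 2·inc(M). -/

import Mathlib

open Matrix MeasureTheory
open scoped Classical

noncomputable section

namespace LVGGM

variable {p h : ℕ}

/-- Spectral norm (largest singular value) of a real square matrix. -/
def specNorm (M : Matrix (Fin p) (Fin p) ℝ) : ℝ :=
  ‖Matrix.toEuclideanCLM (𝕜 := ℝ) M‖

/-- Entrywise max norm `‖M‖_∞`. -/
def maxNorm (M : Matrix (Fin p) (Fin p) ℝ) : ℝ :=
  ⨆ i, ⨆ j, |M i j|

/-- Entrywise ℓ₁ norm `‖M‖₁`. -/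
def l1Norm (M : Matrix (Fin p) (Fin p) ℝ) : ℝ :=
  ∑ i, ∑ j, |M i j|

/-- The matrix of the orthogonal projection of ℝ^p onto the column space of `M`. -/
def colProj (M : Matrix (Fin p) (Fin p) ℝ) : Matrix (Fin p) (Fin p) ℝ :=
  LinearMap.toMatrix (EuclideanSpace.basisFun (Fin p) ℝ).toBasis
    (EuclideanSpace.basisFun (Fin p) ℝ).toBasis
    ((LinearMap.range (Matrix.toEuclideanLin M)).subtype ∘ₗ
      ((LinearMap.range (Matrix.toEuclideanLin M)).orthogonalProjectionOnto).toLinearMap)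

/-- Singular values of a matrix, as square roots of eigenvalues of `Mᴴ M`. -/
def singVals (M : Matrix (Fin p) (Fin p) ℝ) (i : Fin p) : ℝ :=
  Real.sqrt ((Matrix.posSemidef_conjTranspose_mul_self M).1.eigenvalues i)

/-! ### Sparse tangent spaces -/

/-- Tangent space to the variety of sparse matrices at `M₀`. -/
def OmegaSet (M₀ : Matrix (Fin p) (Fin p) ℝ) : Set (Matrix (Fin p) (Fin p) ℝ) :=
  {N | ∀ i j, M₀ i j = 0 → N i j = 0}

/-- Orthogonal projection onto `OmegaSet M₀`. -/
def projOmega (M₀ N : Matrix (Fin p) (Fin p) ℝ) : Matrix (Fin p) (Fin p) ℝ :=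
  Matrix.of fun i j => if M₀ i j = 0 then 0 else N i j

/-- Orthogonal projection onto the orthogonal complement of `OmegaSet M₀`. -/
def projOmegaPerp (M₀ N : Matrix (Fin p) (Fin p) ℝ) : Matrix (Fin p) (Fin p) ℝ :=
  Matrix.of fun i j => if M₀ i j = 0 then N i j else 0

/-- `μ(Ω(M₀))`: max spectral norm over the `‖·‖_∞`-unit ball of `Ω(M₀)`. -/
def muOmega (M₀ : Matrix (Fin p) (Fin p) ℝ) : ℝ :=
  ⨆ N : {N : Matrix (Fin p) (Fin p) ℝ // N ∈ OmegaSet M₀ ∧ maxNorm N ≤ 1}, specNorm N.1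

/-! ### Low-rank tangent spaces (symmetric version) -/

/-- `𝒫_{T(M)}` for symmetric `M`: `N ↦ P N + N P − P N P` with `P` the column-space projector. -/
def projTsym (M N : Matrix (Fin p) (Fin p) ℝ) : Matrix (Fin p) (Fin p) ℝ :=
  colProj M * N + N * colProj M - colProj M * N * colProj M

/-- `𝒫_{T(M)^⊥}` for symmetric `M`: `N ↦ (I−P) N (I−P)`. -/
def projTsymPerp (M N : Matrix (Fin p) (Fin p) ℝ) : Matrix (Fin p) (Fin p) ℝ :=
  (1 - colProj M) * N * (1 - colProj M)

/-- Tangent space to the variety of symmetric low-rank matrices at symmetric `M`. -/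
def TsetSym (M : Matrix (Fin p) (Fin p) ℝ) : Set (Matrix (Fin p) (Fin p) ℝ) :=
  {N | N.IsHermitian ∧ projTsymPerp M N = 0}

/-- `ξ(T(M))` (symmetric version). -/
def xiT (M : Matrix (Fin p) (Fin p) ℝ) : ℝ :=
  ⨆ N : {N : Matrix (Fin p) (Fin p) ℝ // N ∈ TsetSym M ∧ specNorm N ≤ 1}, maxNorm N.1

/-- `ρ(T(M₁), T(M₂))` (symmetric version). -/
def rhoSym (M₁ M₂ : Matrix (Fin p) (Fin p) ℝ) : ℝ :=
  ⨆ N : {N : Matrix (Fin p) (Fin p) ℝ // specNorm N ≤ 1},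
    specNorm (projTsym M₁ N.1 - projTsym M₂ N.1)

/-! ### Low-rank tangent spaces (general version) -/

/-- `𝒫_{T(M)}` for general `M`: `N ↦ P_U N + N P_V − P_U N P_V`. -/
def projTgen (M N : Matrix (Fin p) (Fin p) ℝ) : Matrix (Fin p) (Fin p) ℝ :=
  colProj M * N + N * colProj Mᵀ - colProj M * N * colProj Mᵀ

/-- `𝒫_{T(M)^⊥}` for general `M`. -/
def projTgenPerp (M N : Matrix (Fin p) (Fin p) ℝ) : Matrix (Fin p) (Fin p) ℝ :=
  (1 - colProj M) * N * (1 - colProj Mᵀ)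

/-- Tangent space to the variety of low-rank matrices at a general matrix `M`. -/
def TsetGen (M : Matrix (Fin p) (Fin p) ℝ) : Set (Matrix (Fin p) (Fin p) ℝ) :=
  {N | projTgenPerp M N = 0}

/-- `ξ(T(M))` (general version). -/
def xiGen (M : Matrix (Fin p) (Fin p) ℝ) : ℝ :=
  ⨆ N : {N : Matrix (Fin p) (Fin p) ℝ // N ∈ TsetGen M ∧ specNorm N ≤ 1}, maxNorm N.1

/-- Euclidean norm of the `i`-th column of `P`, i.e. `‖P e_i‖`. -/
def colEucNorm (P : Matrix (Fin p) (Fin p) ℝ) (i : Fin p) : ℝ :=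
  Real.sqrt (∑ j, (P j i) ^ 2)

/-- Incoherence `inc(M)` of the row/column spaces of `M`. -/
def inc (M : Matrix (Fin p) (Fin p) ℝ) : ℝ :=
  max (⨆ i, colEucNorm (colProj M) i) (⨆ i, colEucNorm (colProj Mᵀ) i)

/-! ### Orthogonal projections onto arbitrary subspaces of matrices -/

/-- Matrices as vectors in the Euclidean space of entries (trace inner product). -/
def toELin : Matrix (Fin p) (Fin p) ℝ →ₗ[ℝ] EuclideanSpace ℝ (Fin p × Fin p) where
  toFun M := WithLp.toLp 2 (fun q : Fin p × Fin p => M q.1 q.2)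
  map_add' _ _ := rfl
  map_smul' _ _ := rfl

/-- Orthogonal projection (trace inner product) onto a subspace of matrices. -/
def matProj (T : Submodule ℝ (Matrix (Fin p) (Fin p) ℝ)) (N : Matrix (Fin p) (Fin p) ℝ) :
    Matrix (Fin p) (Fin p) ℝ :=
  Matrix.of fun i j => ((T.map toELin).orthogonalProjectionOnto (toELin N) : EuclideanSpace ℝ (Fin p × Fin p)) (i, j)

/-- `ρ(T₁,T₂)` for arbitrary subspaces of matrices. -/
def rhoSub (T₁ T₂ : Submodule ℝ (Matrix (Fin p) (Fin p) ℝ)) : ℝ :=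
  ⨆ N : {N : Matrix (Fin p) (Fin p) ℝ // specNorm N ≤ 1},
    specNorm (matProj T₁ N.1 - matProj T₂ N.1)

/-- `ξ(T)` for an arbitrary subspace of matrices. -/
def xiSub (T : Submodule ℝ (Matrix (Fin p) (Fin p) ℝ)) : ℝ :=
  ⨆ N : {N : Matrix (Fin p) (Fin p) ℝ // N ∈ T ∧ specNorm N ≤ 1}, maxNorm N.1

/-! ### The dual norm g_γ -/

/-- `g_γ(S,L) = max(‖S‖_∞/γ, ‖L‖₂)`. -/
def gNorm (γ : ℝ) (S L : Matrix (Fin p) (Fin p) ℝ) : ℝ :=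
  max (maxNorm S / γ) (specNorm L)

/-- `g_γ(𝒜†(M)) = max(‖M‖_∞/γ, ‖M‖₂)`. -/
def gA (γ : ℝ) (M : Matrix (Fin p) (Fin p) ℝ) : ℝ :=
  max (maxNorm M / γ) (specNorm M)

/-! ### Latent-variable Fisher information setup -/

/-- `S* = K*_O`. -/
def Sstar (K : Matrix (Fin p ⊕ Fin h) (Fin p ⊕ Fin h) ℝ) : Matrix (Fin p) (Fin p) ℝ :=
  K.toBlocks₁₁

/-- `L* = K*_{O,H} (K*_H)⁻¹ K*_{H,O}`. -/
def Lstar (K : Matrix (Fin p ⊕ Fin h) (Fin p ⊕ Fin h) ℝ) : Matrix (Fin p) (Fin p) ℝ :=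
  K.toBlocks₁₂ * (K.toBlocks₂₂)⁻¹ * K.toBlocks₂₁

/-- `K̃*_O = S* − L*` (Schur complement). -/
def KtildeO (K : Matrix (Fin p ⊕ Fin h) (Fin p ⊕ Fin h) ℝ) : Matrix (Fin p) (Fin p) ℝ :=
  Sstar K - Lstar K

/-- `Σ*_O = (K̃*_O)⁻¹`. -/
def SigmaO (K : Matrix (Fin p ⊕ Fin h) (Fin p ⊕ Fin h) ℝ) : Matrix (Fin p) (Fin p) ℝ :=
  (KtildeO K)⁻¹

/-- `ψ = ‖Σ*_O‖₂`. -/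
def psi (K : Matrix (Fin p ⊕ Fin h) (Fin p ⊕ Fin h) ℝ) : ℝ :=
  specNorm (SigmaO K)

/-- Fisher information operator `ℐ*(M) = Σ*_O M Σ*_O`. -/
def Istar (K : Matrix (Fin p ⊕ Fin h) (Fin p ⊕ Fin h) ℝ) (M : Matrix (Fin p) (Fin p) ℝ) :
    Matrix (Fin p) (Fin p) ℝ :=
  SigmaO K * M * SigmaO K

/-- A nearby tangent space: `T' = T(M')` for a symmetric `M'` with the same rank as `Lst`
and `ρ(T',T(Lst)) ≤ ξ(T(Lst))/2`. -/
def Nearby (Lst M' : Matrix (Fin p) (Fin p) ℝ) : Prop :=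
  M'.IsHermitian ∧ M'.rank = Lst.rank ∧ rhoSym M' Lst ≤ xiT Lst / 2

/-- `α_Ω`. -/
def alphaOmega (K : Matrix (Fin p ⊕ Fin h) (Fin p ⊕ Fin h) ℝ) : ℝ :=
  ⨅ M : {M : Matrix (Fin p) (Fin p) ℝ // M ∈ OmegaSet (Sstar K) ∧ maxNorm M = 1},
    maxNorm (projOmega (Sstar K) (Istar K (projOmega (Sstar K) M.1)))

/-- `δ_Ω`. -/
def deltaOmega (K : Matrix (Fin p ⊕ Fin h) (Fin p ⊕ Fin h) ℝ) : ℝ :=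
  ⨆ M : {M : Matrix (Fin p) (Fin p) ℝ // M ∈ OmegaSet (Sstar K) ∧ maxNorm M = 1},
    maxNorm (projOmegaPerp (Sstar K) (Istar K (projOmega (Sstar K) M.1)))

/-- `β_Ω`. -/
def betaOmega (K : Matrix (Fin p ⊕ Fin h) (Fin p ⊕ Fin h) ℝ) : ℝ :=
  ⨆ M : {M : Matrix (Fin p) (Fin p) ℝ // M ∈ OmegaSet (Sstar K) ∧ specNorm M = 1},
    specNorm (Istar K M.1)

/-- `α_T`. -/
def alphaTC (K : Matrix (Fin p ⊕ Fin h) (Fin p ⊕ Fin h) ℝ) : ℝ :=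
  ⨅ x : {x : Matrix (Fin p) (Fin p) ℝ × Matrix (Fin p) (Fin p) ℝ //
      Nearby (Lstar K) x.1 ∧ x.2 ∈ TsetSym x.1 ∧ specNorm x.2 = 1},
    specNorm (projTsym x.1.1 (Istar K (projTsym x.1.1 x.1.2)))

/-- `δ_T`. -/
def deltaTC (K : Matrix (Fin p ⊕ Fin h) (Fin p ⊕ Fin h) ℝ) : ℝ :=
  ⨆ x : {x : Matrix (Fin p) (Fin p) ℝ × Matrix (Fin p) (Fin p) ℝ //
      Nearby (Lstar K) x.1 ∧ x.2 ∈ TsetSym x.1 ∧ specNorm x.2 = 1},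
    specNorm (projTsymPerp x.1.1 (Istar K (projTsym x.1.1 x.1.2)))

/-- `β_T`. -/
def betaTC (K : Matrix (Fin p ⊕ Fin h) (Fin p ⊕ Fin h) ℝ) : ℝ :=
  ⨆ x : {x : Matrix (Fin p) (Fin p) ℝ × Matrix (Fin p) (Fin p) ℝ //
      Nearby (Lstar K) x.1 ∧ x.2 ∈ TsetSym x.1 ∧ maxNorm x.2 = 1},
    maxNorm (Istar K x.1.2)

/-- `α = min(α_Ω, α_T)`. -/
def alphaC (K : Matrix (Fin p ⊕ Fin h) (Fin p ⊕ Fin h) ℝ) : ℝ :=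
  min (alphaOmega K) (alphaTC K)

/-- `δ = max(δ_Ω, δ_T)`. -/
def deltaC (K : Matrix (Fin p ⊕ Fin h) (Fin p ⊕ Fin h) ℝ) : ℝ :=
  max (deltaOmega K) (deltaTC K)

/-- `β = max(β_Ω, β_T)`. -/
def betaC (K : Matrix (Fin p ⊕ Fin h) (Fin p ⊕ Fin h) ℝ) : ℝ :=
  max (betaOmega K) (betaTC K)

/-- The positive semidefinite square root of a positive semidefinite matrix
(the former `Matrix.PosSemidef.sqrt`, spelled out with its old definition). -/
def psdSqrt {n : Type*} [Fintype n] [DecidableEq n] {A : Matrix n n ℝ} (hA : A.PosSemidef) :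
    Matrix n n ℝ :=
  (hA.1.eigenvectorUnitary : Matrix n n ℝ) * diagonal ((↑) ∘ (√·) ∘ hA.1.eigenvalues) *
    (star hA.1.eigenvectorUnitary : Matrix n n ℝ)

/-! ### Probability: iid Gaussian samples and sample covariance -/

/-- The joint law of `n` i.i.d. samples from `N(0, S)` on `ℝ^p`, realized by pushing forward
i.i.d. standard Gaussians through the positive-semidefinite square root of `S`. -/
def iidGaussian (n p : ℕ) (S : Matrix (Fin p) (Fin p) ℝ) : Measure (Fin n → Fin p → ℝ) :=
  if hS : S.PosSemidef then
    (Measure.pi fun _ : Fin n => Measure.pi fun _ : Fin p =>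
        ProbabilityTheory.gaussianReal 0 1).map
      (fun Z => fun i => (psdSqrt hS).mulVec (Z i))
  else 0

/-- Sample covariance matrix of samples `X 1, …, X n`. -/
def sampleCov {p n : ℕ} (X : Fin n → Fin p → ℝ) : Matrix (Fin p) (Fin p) ℝ :=
  (n : ℝ)⁻¹ • ∑ i, Matrix.vecMulVec (X i) (X i)

/-! ### Optimization programs -/

/-- Nuclear norm `‖M‖_*` (sum of singular values). -/
def nuclearNorm (M : Matrix (Fin p) (Fin p) ℝ) : ℝ :=
  (psdSqrt (Matrix.posSemidef_conjTranspose_mul_self M)).trace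

/-- Objective of the program (sdp1): `tr((S−L)Σ) − log det(S−L) + λ(γ‖S‖₁ + tr(L))`. -/
def objSDP1 (Sig : Matrix (Fin p) (Fin p) ℝ) (lam gam : ℝ)
    (S L : Matrix (Fin p) (Fin p) ℝ) : ℝ :=
  ((S - L) * Sig).trace - Real.log (S - L).det + lam * (gam * l1Norm S + L.trace)

/-- Feasibility for (sdp1): symmetric `S, L`, `S − L ≻ 0`, `L ⪰ 0`. -/
def FeasSDP1 (S L : Matrix (Fin p) (Fin p) ℝ) : Prop :=
  S.IsHermitian ∧ L.IsHermitian ∧ (S - L).PosDef ∧ L.PosSemidef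

/-- `(S,L)` is an optimum of the program (sdp1). -/
def IsOptSDP1 (Sig : Matrix (Fin p) (Fin p) ℝ) (lam gam : ℝ)
    (S L : Matrix (Fin p) (Fin p) ℝ) : Prop :=
  FeasSDP1 S L ∧ ∀ S' L', FeasSDP1 S' L' →
    objSDP1 Sig lam gam S L ≤ objSDP1 Sig lam gam S' L'

/-- Objective with the nuclear norm: `tr((S−L)Σ) − log det(S−L) + λ(γ‖S‖₁ + ‖L‖_*)`. -/
def objNuc (Sig : Matrix (Fin p) (Fin p) ℝ) (lam gam : ℝ)
    (S L : Matrix (Fin p) (Fin p) ℝ) : ℝ :=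
  ((S - L) * Sig).trace - Real.log (S - L).det + lam * (gam * l1Norm S + nuclearNorm L)

/-- Feasibility for the tangent-space constrained program: symmetric, `S ∈ Ω(Sst)`,
`L ∈ T(M')`, `S − L ≻ 0`. -/
def FeasTS (Sst M' : Matrix (Fin p) (Fin p) ℝ) (S L : Matrix (Fin p) (Fin p) ℝ) : Prop :=
  S.IsHermitian ∧ S ∈ OmegaSet Sst ∧ L ∈ TsetSym M' ∧ (S - L).PosDef

/-- Optimality for the tangent-space constrained program. -/
def IsOptTS (Sst M' Sig : Matrix (Fin p) (Fin p) ℝ) (lam gam : ℝ)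
    (S L : Matrix (Fin p) (Fin p) ℝ) : Prop :=
  FeasTS Sst M' S L ∧ ∀ S' L', FeasTS Sst M' S' L' →
    objNuc Sig lam gam S L ≤ objNuc Sig lam gam S' L'

/-- Feasibility for the unconstrained nuclear-norm program: symmetric, `S − L ≻ 0`. -/
def FeasSy (S L : Matrix (Fin p) (Fin p) ℝ) : Prop :=
  S.IsHermitian ∧ L.IsHermitian ∧ (S - L).PosDef

/-- Optimality for the unconstrained nuclear-norm program. -/
def IsOptSy (Sig : Matrix (Fin p) (Fin p) ℝ) (lam gam : ℝ)
    (S L : Matrix (Fin p) (Fin p) ℝ) : Prop :=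
  FeasSy S L ∧ ∀ S' L', FeasSy S' L' →
    objNuc Sig lam gam S L ≤ objNuc Sig lam gam S' L'

/-! ### Spectral projectors and inertia -/

/-- Orthogonal projection onto the direct sum of the eigenspaces of a symmetric matrix `A`
corresponding to eigenvalues of magnitude less than `η`. -/
def spectralProjLT (A : Matrix (Fin p) (Fin p) ℝ) (η : ℝ) : Matrix (Fin p) (Fin p) ℝ :=
  if hA : A.IsHermitian then
    ∑ i ∈ Finset.univ.filter (fun i => |hA.eigenvalues i| < η),
      Matrix.vecMulVec (fun j => hA.eigenvectorBasis i j) (fun j => hA.eigenvectorBasis i j)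
  else 0

/-- `t` is an eigenvalue of `A`. -/
def hasEigval (A : Matrix (Fin p) (Fin p) ℝ) (t : ℝ) : Prop :=
  ∃ v : Fin p → ℝ, v ≠ 0 ∧ A.mulVec v = t • v

/-- Inertia (numbers of positive, negative, and zero eigenvalues) of a symmetric matrix. -/
def inertia (M : Matrix (Fin p) (Fin p) ℝ) : ℕ × ℕ × ℕ :=
  if hM : M.IsHermitian then
    ((Finset.univ.filter fun i => 0 < hM.eigenvalues i).card,
     (Finset.univ.filter fun i => hM.eigenvalues i < 0).card,
     (Finset.univ.filter fun i => hM.eigenvalues i = 0).card)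
  else (0, 0, 0)

end LVGGM

/-!
Write `P_U`, `P_V` for the orthogonal projections onto the column and row spaces of `M`. An
operator `T` in the tangent space satisfies `P_U^⊥ T P_V^⊥ = 0`, hence
`T = P_U T + P_U^⊥ T P_V`, and Cauchy–Schwarz gives
`|⟪e_i, T e_j⟫| ≤ ‖T‖ (‖P_U e_i‖ + ‖P_V e_j‖) ≤ 2 ‖T‖ inc(M)`.
Conversely the rank-one operators `x ↦ ⟪e_i, x⟫ P_U e_i / ‖P_U e_i‖` and
`x ↦ ⟪P_V e_i, x⟫ e_i / ‖P_V e_i‖` lie in the tangent space, have norm at most one, and their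
`(i, i)` entries are `‖P_U e_i‖` and `‖P_V e_i‖`.
-/

open ContinuousLinearMap InnerProductSpace

namespace LowRankTangent

variable {𝕜 E : Type*} [RCLike 𝕜] [NormedAddCommGroup E] [InnerProductSpace 𝕜 E]
  {U V : Submodule 𝕜 E} [U.HasOrthogonalProjection] [V.HasOrthogonalProjection]

local notation "⟪" x ", " y "⟫" => inner 𝕜 x y

theorem norm_inner_apply_le {T : E →L[𝕜] E}
    (hT : Uᗮ.starProjection ∘L T ∘L Vᗮ.starProjection = 0) (x y : E) :
    ‖⟪x, T y⟫‖ ≤ ‖T‖ * (‖U.starProjection x‖ * ‖y‖ + ‖x‖ * ‖V.starProjection y‖) := by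
  have hperp : ⟪Uᗮ.starProjection x, T (Vᗮ.starProjection y)⟫ = 0 := by
    rw [Submodule.inner_starProjection_left_eq_right,
      show Uᗮ.starProjection (T (Vᗮ.starProjection y)) = 0 from congr($hT y), inner_zero_right]
  have hsplit : ⟪x, T y⟫ = ⟪U.starProjection x, T y⟫ +
      ⟪Uᗮ.starProjection x, T (V.starProjection y)⟫ := by
    conv_lhs => rw [← U.starProjection_add_starProjection_orthogonal x]
    rw [inner_add_left]
    congr 1
    conv_lhs => rw [← V.starProjection_add_starProjection_orthogonal y]
    rw [map_add, inner_add_right, hperp, add_zero]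
  calc ‖⟪x, T y⟫‖
      ≤ ‖U.starProjection x‖ * ‖T y‖ + ‖Uᗮ.starProjection x‖ * ‖T (V.starProjection y)‖ := by
        rw [hsplit]
        exact (norm_add_le _ _).trans
          (add_le_add (norm_inner_le_norm _ _) (norm_inner_le_norm _ _))
    _ ≤ ‖U.starProjection x‖ * (‖T‖ * ‖y‖) + ‖x‖ * (‖T‖ * ‖V.starProjection y‖) := by
        gcongr
        · exact T.le_opNorm y
        · exact Uᗮ.norm_starProjection_apply_le x
        · exact T.le_opNorm _
    _ = ‖T‖ * (‖U.starProjection x‖ * ‖y‖ + ‖x‖ * ‖V.starProjection y‖) := by ring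

theorem orthogonal_comp_rankOne_comp_orthogonal_of_mem_left {u : E} (hu : u ∈ U) (w : E) :
    Uᗮ.starProjection ∘L rankOne 𝕜 u w ∘L Vᗮ.starProjection = 0 := by
  ext z
  simp [Submodule.starProjection_orthogonal_apply_eq_zero hu]

theorem orthogonal_comp_rankOne_comp_orthogonal_of_mem_right (u : E) {w : E} (hw : w ∈ V) :
    Uᗮ.starProjection ∘L rankOne 𝕜 u w ∘L Vᗮ.starProjection = 0 := by
  ext z
  simp only [ContinuousLinearMap.comp_apply, rankOne_apply, _root_.zero_apply]
  rw [← Submodule.inner_starProjection_left_eq_right,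
    Submodule.starProjection_orthogonal_apply_eq_zero hw, inner_zero_left, zero_smul, map_zero]

theorem inner_starProjection_self (K : Submodule 𝕜 E) [K.HasOrthogonalProjection] (x : E) :
    ⟪x, K.starProjection x⟫ = (‖K.starProjection x‖ ^ 2 : 𝕜) := by
  have hPx := K.starProjection_eq_self_iff.mpr (K.starProjection_apply_mem x)
  rw [← hPx, ← Submodule.inner_starProjection_left_eq_right, hPx, inner_self_eq_norm_sq_to_K]

theorem exists_inner_apply_eq_norm_starProjection_left {x : E} (hx : ‖x‖ = 1) :
    ∃ T : E →L[𝕜] E, Uᗮ.starProjection ∘L T ∘L Vᗮ.starProjection = 0 ∧ ‖T‖ ≤ 1 ∧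
      ⟪x, T x⟫ = (‖U.starProjection x‖ : 𝕜) := by
  set c := ‖U.starProjection x‖ with hc
  refine ⟨rankOne 𝕜 ((c⁻¹ : 𝕜) • U.starProjection x) x,
    orthogonal_comp_rankOne_comp_orthogonal_of_mem_left
      (U.smul_mem _ (U.starProjection_apply_mem x)) x, ?_, ?_⟩
  · rw [norm_rankOne, norm_smul, hx, mul_one, norm_inv, RCLike.norm_ofReal, abs_norm]
    exact inv_mul_le_one_of_le₀ le_rfl (norm_nonneg _)
  · rw [rankOne_apply, inner_smul_right, inner_smul_right, inner_starProjection_self,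
      inner_self_eq_norm_sq_to_K, hx, ← hc, RCLike.ofReal_one, one_pow, one_mul, sq,
      ← mul_assoc, inv_mul_mul_self]

theorem exists_inner_apply_eq_norm_starProjection_right {x : E} (hx : ‖x‖ = 1) :
    ∃ T : E →L[𝕜] E, Uᗮ.starProjection ∘L T ∘L Vᗮ.starProjection = 0 ∧ ‖T‖ ≤ 1 ∧
      ⟪x, T x⟫ = (‖V.starProjection x‖ : 𝕜) := by
  set c := ‖V.starProjection x‖ with hc
  refine ⟨rankOne 𝕜 x ((c⁻¹ : 𝕜) • V.starProjection x),
    orthogonal_comp_rankOne_comp_orthogonal_of_mem_right x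
      (V.smul_mem _ (V.starProjection_apply_mem x)), ?_, ?_⟩
  · rw [norm_rankOne, norm_smul, hx, one_mul, norm_inv, RCLike.norm_ofReal, abs_norm]
    exact inv_mul_le_one_of_le₀ le_rfl (norm_nonneg _)
  · rw [rankOne_apply, inner_smul_right, inner_smul_left,
      Submodule.inner_starProjection_left_eq_right, inner_starProjection_self,
      inner_self_eq_norm_sq_to_K, hx, ← hc, map_inv₀, RCLike.conj_ofReal, RCLike.ofReal_one,
      one_pow, mul_one, sq, ← mul_assoc, inv_mul_mul_self]

end LowRankTangent

namespace LVGGM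

open LowRankTangent

variable {p : ℕ}

local notation "e" i => EuclideanSpace.single i (1 : ℝ)

abbrev colSpace (M : Matrix (Fin p) (Fin p) ℝ) : Submodule ℝ (EuclideanSpace ℝ (Fin p)) :=
  LinearMap.range (toEuclideanLin M)

theorem toEuclideanCLM_colProj (M : Matrix (Fin p) (Fin p) ℝ) :
    toEuclideanCLM (𝕜 := ℝ) (colProj M) = (colSpace M).starProjection := by
  refine ContinuousLinearMap.coe_injective ?_
  rw [coe_toEuclideanCLM_eq_toEuclideanLin]
  exact toLin_toMatrix (EuclideanSpace.basisFun (Fin p) ℝ).toBasis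
    (EuclideanSpace.basisFun (Fin p) ℝ).toBasis _

theorem toEuclideanCLM_projTgenPerp (M N : Matrix (Fin p) (Fin p) ℝ) :
    toEuclideanCLM (𝕜 := ℝ) (projTgenPerp M N) = (colSpace M)ᗮ.starProjection ∘L
      toEuclideanCLM (𝕜 := ℝ) N ∘L (colSpace Mᵀ)ᗮ.starProjection := by
  rw [projTgenPerp, map_mul, map_mul, map_sub, map_sub, map_one, toEuclideanCLM_colProj,
    toEuclideanCLM_colProj, ← Submodule.starProjection_orthogonal',
    ← Submodule.starProjection_orthogonal', mul_assoc]
  rfl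

theorem mem_TsetGen_iff {M N : Matrix (Fin p) (Fin p) ℝ} :
    N ∈ TsetGen M ↔ (colSpace M)ᗮ.starProjection ∘L toEuclideanCLM (𝕜 := ℝ) N ∘L
      (colSpace Mᵀ)ᗮ.starProjection = 0 := by
  rw [← toEuclideanCLM_projTgenPerp, EmbeddingLike.map_eq_zero_iff]
  rfl

theorem apply_eq_inner_toEuclideanCLM (A : Matrix (Fin p) (Fin p) ℝ) (i j : Fin p) :
    A i j = inner ℝ (e i) (toEuclideanCLM (𝕜 := ℝ) A (e j)) := by
  simp [inner_toEuclideanCLM]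

theorem colEucNorm_eq_norm_toEuclideanCLM (A : Matrix (Fin p) (Fin p) ℝ) (i : Fin p) :
    colEucNorm A i = ‖toEuclideanCLM (𝕜 := ℝ) A (e i)‖ := by
  simp [colEucNorm, EuclideanSpace.norm_eq]

theorem abs_apply_le_maxNorm (N : Matrix (Fin p) (Fin p) ℝ) (i j : Fin p) :
    |N i j| ≤ maxNorm N :=
  (le_ciSup (f := fun j => |N i j|) (Set.finite_range _).bddAbove j).trans
    (le_ciSup (f := fun i => ⨆ j, |N i j|) (Set.finite_range _).bddAbove i)

theorem maxNorm_le {N : Matrix (Fin p) (Fin p) ℝ} {c : ℝ} (hc : 0 ≤ c)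
    (h : ∀ i j, |N i j| ≤ c) : maxNorm N ≤ c :=
  Real.iSup_le (fun i => Real.iSup_le (h i) hc) hc

theorem maxNorm_nonneg (N : Matrix (Fin p) (Fin p) ℝ) : 0 ≤ maxNorm N :=
  Real.iSup_nonneg fun _ => Real.iSup_nonneg fun _ => abs_nonneg _

theorem maxNorm_le_specNorm (N : Matrix (Fin p) (Fin p) ℝ) : maxNorm N ≤ specNorm N := by
  refine maxNorm_le (norm_nonneg _) fun i j => ?_
  rw [apply_eq_inner_toEuclideanCLM N i j]
  calc |inner ℝ (e i) (toEuclideanCLM (𝕜 := ℝ) N (e j))|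
      ≤ ‖e i‖ * ‖toEuclideanCLM (𝕜 := ℝ) N (e j)‖ := abs_real_inner_le_norm _ _
    _ ≤ 1 * (specNorm N * ‖e j‖) := by
        rw [PiLp.norm_single, norm_one]
        exact mul_le_mul_of_nonneg_left ((toEuclideanCLM (𝕜 := ℝ) N).le_opNorm _) zero_le_one
    _ = specNorm N := by rw [PiLp.norm_single, norm_one, one_mul, mul_one]

theorem maxNorm_le_xiGen {M N : Matrix (Fin p) (Fin p) ℝ} (hN : N ∈ TsetGen M)
    (hs : specNorm N ≤ 1) : maxNorm N ≤ xiGen M :=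
  le_ciSup (f := fun N : {N // N ∈ TsetGen M ∧ specNorm N ≤ 1} => maxNorm N.1)
    ⟨1, by rintro _ ⟨N, rfl⟩; exact (maxNorm_le_specNorm _).trans N.2.2⟩ ⟨N, hN, hs⟩

theorem xiGen_nonneg (M : Matrix (Fin p) (Fin p) ℝ) : 0 ≤ xiGen M :=
  (maxNorm_nonneg 0).trans <| maxNorm_le_xiGen (by simp [mem_TsetGen_iff]) (by simp [specNorm])

theorem xiGen_le {M : Matrix (Fin p) (Fin p) ℝ} {c : ℝ} (hc : 0 ≤ c)
    (h : ∀ N ∈ TsetGen M, specNorm N ≤ 1 → maxNorm N ≤ c) : xiGen M ≤ c :=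
  Real.iSup_le (fun N => h N.1 N.2.1 N.2.2) hc

theorem abs_apply_le_of_mem_TsetGen {M N : Matrix (Fin p) (Fin p) ℝ} (hN : N ∈ TsetGen M)
    (hs : specNorm N ≤ 1) (i j : Fin p) :
    |N i j| ≤ colEucNorm (colProj M) i + colEucNorm (colProj Mᵀ) j := by
  have h := norm_inner_apply_le (mem_TsetGen_iff.mp hN) (e i) (e j)
  rw [PiLp.norm_single, PiLp.norm_single, norm_one, mul_one, one_mul, Real.norm_eq_abs,
    ← apply_eq_inner_toEuclideanCLM N i j] at h
  rw [colEucNorm_eq_norm_toEuclideanCLM, colEucNorm_eq_norm_toEuclideanCLM,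
    toEuclideanCLM_colProj, toEuclideanCLM_colProj]
  exact h.trans (mul_le_of_le_one_left (by positivity) hs)

theorem inner_apply_le_xiGen {M : Matrix (Fin p) (Fin p) ℝ}
    {T : EuclideanSpace ℝ (Fin p) →L[ℝ] EuclideanSpace ℝ (Fin p)}
    (hT : (colSpace M)ᗮ.starProjection ∘L T ∘L (colSpace Mᵀ)ᗮ.starProjection = 0)
    (hT1 : ‖T‖ ≤ 1) (i j : Fin p) : inner ℝ (e i) (T (e j)) ≤ xiGen M := by
  set N := (toEuclideanCLM (𝕜 := ℝ)).symm T
  have hNT : toEuclideanCLM (𝕜 := ℝ) N = T := StarAlgEquiv.apply_symm_apply _ _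
  calc inner ℝ (e i) (T (e j)) = N i j := by rw [apply_eq_inner_toEuclideanCLM N i j, hNT]
    _ ≤ |N i j| := le_abs_self _
    _ ≤ maxNorm N := abs_apply_le_maxNorm N i j
    _ ≤ xiGen M := maxNorm_le_xiGen (mem_TsetGen_iff.mpr (hNT ▸ hT))
        (by rwa [specNorm, hNT])

theorem colEucNorm_colProj_le_xiGen (M : Matrix (Fin p) (Fin p) ℝ) (i : Fin p) :
    colEucNorm (colProj M) i ≤ xiGen M := by
  obtain ⟨T, hT, hT1, hTi⟩ := exists_inner_apply_eq_norm_starProjection_left (U := colSpace M)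
    (V := colSpace Mᵀ) (x := e i) (by simp)
  rw [colEucNorm_eq_norm_toEuclideanCLM, toEuclideanCLM_colProj]
  simpa [hTi] using inner_apply_le_xiGen hT hT1 i i

theorem colEucNorm_colProj_transpose_le_xiGen (M : Matrix (Fin p) (Fin p) ℝ) (i : Fin p) :
    colEucNorm (colProj Mᵀ) i ≤ xiGen M := by
  obtain ⟨T, hT, hT1, hTi⟩ := exists_inner_apply_eq_norm_starProjection_right (U := colSpace M)
    (V := colSpace Mᵀ) (x := e i) (by simp)
  rw [colEucNorm_eq_norm_toEuclideanCLM, toEuclideanCLM_colProj]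
  simpa [hTi] using inner_apply_le_xiGen hT hT1 i i

theorem colEucNorm_colProj_le_inc (M : Matrix (Fin p) (Fin p) ℝ) (i : Fin p) :
    colEucNorm (colProj M) i ≤ inc M :=
  (le_ciSup (Set.finite_range _).bddAbove i).trans (le_max_left _ _)

theorem colEucNorm_colProj_transpose_le_inc (M : Matrix (Fin p) (Fin p) ℝ) (i : Fin p) :
    colEucNorm (colProj Mᵀ) i ≤ inc M :=
  (le_ciSup (Set.finite_range _).bddAbove i).trans (le_max_right _ _)

theorem inc_nonneg (M : Matrix (Fin p) (Fin p) ℝ) : 0 ≤ inc M :=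
  le_max_of_le_left (Real.iSup_nonneg fun _ => Real.sqrt_nonneg _)

theorem inc_le_xiGen (M : Matrix (Fin p) (Fin p) ℝ) : inc M ≤ xiGen M :=
  max_le (Real.iSup_le (colEucNorm_colProj_le_xiGen M) (xiGen_nonneg M))
    (Real.iSup_le (colEucNorm_colProj_transpose_le_xiGen M) (xiGen_nonneg M))

theorem xiGen_le_two_mul_inc (M : Matrix (Fin p) (Fin p) ℝ) : xiGen M ≤ 2 * inc M := by
  have hinc := inc_nonneg M
  refine xiGen_le (by positivity) fun N hN hs => maxNorm_le (by positivity) fun i j => ?_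
  calc |N i j| ≤ colEucNorm (colProj M) i + colEucNorm (colProj Mᵀ) j :=
        abs_apply_le_of_mem_TsetGen hN hs i j
    _ ≤ inc M + inc M :=
        add_le_add (colEucNorm_colProj_le_inc M i) (colEucNorm_colProj_transpose_le_inc M j)
    _ = 2 * inc M := by ring

end LVGGM

theorem statement_2_general {p : ℕ} (M : Matrix (Fin p) (Fin p) ℝ) :
    LVGGM.inc M ≤ LVGGM.xiGen M ∧ LVGGM.xiGen M ≤ 2 * LVGGM.inc M :=
  ⟨LVGGM.inc_le_xiGen M, LVGGM.xiGen_le_two_mul_inc M⟩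

/-- for any nonzero `M`, `inc(M) ≤ ξ(T(M)) ≤ 2 inc(M)`. -/
theorem statement_2 {p : ℕ} (M : Matrix (Fin p) (Fin p) ℝ) (hM : M ≠ 0) :
    LVGGM.inc M ≤ LVGGM.xiGen M ∧ LVGGM.xiGen M ≤ 2 * LVGGM.inc M :=
  statement_2_general M
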